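/- arXiv:2205.06375 — 2 statements merged into one kernel-verified Lean document; each statement's English description precedes it below -/
import Mathlib

section
/- For every nonempty area sequence w = u a (where a is the last letter of w), the word ψ(u) has at least a + 1 admissible insertion positions; consequently ψ(w) is well defined, and ψ(w) is an area sequence of the same size as w. -/
/-- The `i`-th letter of the word `w` (`1`-indexed, as in the paper);
defaults to `0` out of range. -/
def get1 (w : List ℕ) (i : ℕ) : ℕ := w.getD (i - 1) 0

/-- `w` is the area sequence of a Dyck path: the first letter is `0` and each
letter exceeds the previous one by at most one. -/
def IsAreaSeq (w : List ℕ) : Prop :=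
  (w ≠ [] → get1 w 1 = 0) ∧ ∀ i, 1 ≤ i → i < w.length → get1 w (i + 1) ≤ get1 w i + 1

/-- Insertion at position `i` (for `0 ≤ i ≤ n`): `ins w 0` prepends a `0`, and
for `1 ≤ i ≤ n`, `ins w i` inserts the letter `w_i + 1` just after position `i`. -/
def ins (w : List ℕ) (i : ℕ) : List ℕ :=
  w.take i ++ (if i = 0 then 0 else get1 w i + 1) :: w.drop i

/-- The area statistic: the sum of the letters. -/
def area (w : List ℕ) : ℕ := w.sum

/-- The dinv statistic: `dinv w = Σ_i d_i` where `d_i` is the number of `j > i`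
with `w_j = w_i` or `w_j = w_i - 1`. -/
def dinv (w : List ℕ) : ℕ :=
  ∑ i ∈ Finset.Icc 1 w.length,
    ((Finset.Ioc i w.length).filter
      (fun j => get1 w j = get1 w i ∨ get1 w j + 1 = get1 w i)).card

/-- The maximal value of a word (`0` for the empty word). -/
def maxVal (w : List ℕ) : ℕ := w.foldr max 0

/-- Positions of the letters of maximal value `m`. -/
def Maxb (w : List ℕ) : Finset ℕ :=
  (Finset.Icc 1 w.length).filter (fun i => get1 w i = maxVal w)

/-- Positions `i` with `w_i = m - 1` such that all letters after position `i`
are `< m`. -/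
def Maxa (w : List ℕ) : Finset ℕ :=
  (Finset.Icc 1 w.length).filter (fun i =>
    get1 w i + 1 = maxVal w ∧ ∀ j ∈ Finset.Ioc i w.length, get1 w j < maxVal w)

/-- The position of the leftmost letter equal to the maximal value `m` in the
rightmost block of consecutive letters equal to `m`. -/
def i0 (w : List ℕ) : ℕ :=
  ((Finset.Icc 1 w.length).filter (fun i =>
    get1 w i = maxVal w ∧ (i = 1 ∨ get1 w (i - 1) ≠ maxVal w))).sup id

/-- The admissible insertion positions of `w`, listed in admissible order:
the elements of `Maxb w` in decreasing order, then the elements of `Maxa w`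
in decreasing order, then `i0 w - 1`.  The empty word has the single
admissible insertion position `0`. -/
def admissible (w : List ℕ) : List ℕ :=
  if w = [] then [0]
  else ((Maxb w).sort (· ≤ ·)).reverse ++ ((Maxa w).sort (· ≤ ·)).reverse ++ [i0 w - 1]

/-- Auxiliary version of the map `ψ`, reading the reversed word. -/
def psiRev : List ℕ → List ℕ
  | [] => []
  | a :: u => ins (psiRev u) ((admissible (psiRev u)).getD a 0)

/-- The map `ψ`: `ψ(ε) = ε` and `ψ(u a) = ins_{c_a}(ψ(u))` where
`c_0, c_1, …, c_k` are the admissible insertion positions of `ψ(u)` in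
admissible order. -/
def psi (w : List ℕ) : List ℕ := psiRev w.reverse

/-- The bounce sequence: `b_1 = 0`, and `b_i = b_{i-1} + 1` if
`b_{i-1} + 1 ≤ w_i`, otherwise `b_i = 0`. -/
def bseq (w : List ℕ) : ℕ → ℕ
  | 0 => 0
  | 1 => 0
  | (i + 2) => if bseq w (i + 1) + 1 ≤ get1 w (i + 2) then bseq w (i + 1) + 1 else 0

/-- The bounces of `w`: positions `1 < i ≤ n` with `b_i = 0`. -/
def bounces (w : List ℕ) : Finset ℕ :=
  (Finset.Icc 2 w.length).filter (fun i => bseq w i = 0)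

/-- The bounce statistic: the sum of the reversed positions `n - i + 1` of the
bounces of `w`. -/
def bounce (w : List ℕ) : ℕ := ∑ i ∈ bounces w, (w.length - i + 1)

/-! The letter `a` selects the `a`-th admissible position `c` of `v = ψ(u)`, and `ins_c v` then
has at least `a + 1` positions in `Maxb ∪ Maxa`, hence at least `a + 2` admissible positions;
as the next letter is at most `a + 1`, induction along the word gives the bound.
If `c ∈ Maxb v` (with at least `a` elements of `Maxb v` to its right), the inserted letter is a
new strict maximum and those elements move into `Maxa`. Otherwise the inserted letter equals the
maximum `m` of `v` (the letter at `c ∈ Maxa v` or at `c = i0 - 1 > 0` is `m - 1`, and `i0 = 1`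
forces `m = 0`), so `Maxb` gains a position and the part of `Maxa` right of `c` survives.
Every admissible position is at most the length, and insertion at such a position preserves
being an area sequence and adds one to the length. -/

def insLetter (w : List ℕ) (c : ℕ) : ℕ := if c = 0 then 0 else get1 w c + 1

section Insertion

variable {w : List ℕ} {c : ℕ}

theorem ins_eq_insLetter : ins w c = w.take c ++ insLetter w c :: w.drop c := rfl

theorem length_ins (hc : c ≤ w.length) : (ins w c).length = w.length + 1 := by
  simp [ins]; omega

theorem get1_ins_of_le {i : ℕ} (hi : 1 ≤ i) (hic : i ≤ c) (hc : c ≤ w.length) :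
    get1 (ins w c) i = get1 w i := by
  simp only [get1, ins]
  rw [List.getD_append _ _ _ _ (by simp; omega), List.getD_eq_getElem?_getD,
    List.getD_eq_getElem?_getD, List.getElem?_take_of_lt (by omega)]

theorem get1_ins_succ (hc : c ≤ w.length) : get1 (ins w c) (c + 1) = insLetter w c := by
  simp only [get1, ins_eq_insLetter]
  rw [List.getD_append_right _ _ _ _ (by simp), List.length_take_of_le hc]
  simp

theorem get1_ins_of_lt {i : ℕ} (hci : c + 1 < i) (hc : c ≤ w.length) :
    get1 (ins w c) i = get1 w (i - 1) := by
  simp only [get1, ins]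
  rw [List.getD_append_right _ _ _ _ (by simp; omega), List.length_take_of_le hc,
    show i - 1 - c = (i - 1 - 1 - c) + 1 by omega, List.getD_cons_succ,
    List.getD_eq_getElem?_getD, List.getD_eq_getElem?_getD, List.getElem?_drop,
    Nat.add_sub_cancel' (by omega)]

end Insertion

section MaxVal

variable {w : List ℕ}

theorem get1_le_maxVal (i : ℕ) : get1 w i ≤ maxVal w := by
  unfold get1
  rcases lt_or_ge (i - 1) w.length with hi | hi
  · rw [List.getD_eq_getElem _ _ hi]
    exact List.le_max_of_le (List.getElem_mem hi) le_rfl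
  · rw [List.getD_eq_default _ _ hi]
    exact Nat.zero_le _

theorem maxVal_mem (hne : w ≠ []) : maxVal w ∈ w :=
  List.maximum_mem (List.foldr_max_of_ne_nil hne).symm

theorem maxVal_ins {c : ℕ} : maxVal (ins w c) = max (insLetter w c) (maxVal w) := by
  rw [maxVal, ins_eq_insLetter, List.perm_middle.foldr_eq, List.foldr_cons, List.take_append_drop]
  rfl

theorem mem_Maxb {i : ℕ} : i ∈ Maxb w ↔ 1 ≤ i ∧ i ≤ w.length ∧ get1 w i = maxVal w := by
  simp [Maxb, and_assoc]

theorem mem_Maxa {i : ℕ} :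
    i ∈ Maxa w ↔ 1 ≤ i ∧ i ≤ w.length ∧ get1 w i + 1 = maxVal w ∧
      ∀ j, i < j → j ≤ w.length → get1 w j < maxVal w := by
  simp [Maxa, and_assoc]

theorem Maxb_nonempty (hne : w ≠ []) : (Maxb w).Nonempty := by
  obtain ⟨i, hi, hval⟩ := List.getElem_of_mem (maxVal_mem hne)
  refine ⟨i + 1, mem_Maxb.2 ⟨by omega, by omega, ?_⟩⟩
  rwa [get1, Nat.add_sub_cancel, List.getD_eq_getElem _ _ hi]

theorem i0_spec (hne : w ≠ []) :
    1 ≤ i0 w ∧ i0 w ≤ w.length ∧ get1 w (i0 w) = maxVal w ∧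
      (i0 w = 1 ∨ get1 w (i0 w - 1) ≠ maxVal w) := by
  set S := (Finset.Icc 1 w.length).filter (fun i =>
    get1 w i = maxVal w ∧ (i = 1 ∨ get1 w (i - 1) ≠ maxVal w))
  -- the leftmost maximal letter starts a block of maximal letters
  have hS : S.Nonempty := by
    set i := (Maxb w).min' (Maxb_nonempty hne)
    obtain ⟨hi1, hin, hval⟩ := mem_Maxb.1 ((Maxb w).min'_mem (Maxb_nonempty hne))
    refine ⟨i, Finset.mem_filter.2 ⟨Finset.mem_Icc.2 ⟨hi1, hin⟩, hval, ?_⟩⟩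
    refine or_iff_not_imp_left.2 fun hi_ne hprev => ?_
    have := (Maxb w).min'_le (i - 1) (mem_Maxb.2 ⟨by omega, by omega, hprev⟩)
    omega
  obtain ⟨i, hi, hsup⟩ := Finset.exists_mem_eq_sup S hS id
  have hi0 : i0 w = i := hsup
  rw [hi0]
  simpa [S, and_assoc] using hi

end MaxVal

theorem List.le_card_filter_gt_getElem {α : Type*} [LinearOrder α] {l : List α}
    (hl : l.Pairwise (· > ·)) {i : ℕ} (hi : i < l.length) :
    i ≤ (l.toFinset.filter (l[i] < ·)).card := by
  have hsub : (l.take i).toFinset ⊆ l.toFinset.filter (l[i] < ·) := by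
    intro x hx
    obtain ⟨j, hj, rfl⟩ := List.getElem_of_mem (List.mem_toFinset.1 hx)
    rw [List.length_take] at hj
    simp only [Finset.mem_filter, List.mem_toFinset, List.getElem_take]
    exact ⟨List.getElem_mem _, hl.rel_get_of_lt (a := ⟨j, by omega⟩) (b := ⟨i, hi⟩) (by simp; omega)⟩
  calc i = (l.take i).toFinset.card := by
        rw [List.toFinset_card_of_nodup (hl.nodup.sublist (List.take_sublist _ _)),
          List.length_take_of_le hi.le]
    _ ≤ _ := Finset.card_le_card hsub

theorem Finset.getD_sort_reverse_mem_and_le_card_filter (S : Finset ℕ) {i : ℕ} (hi : i < S.card) :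
    (S.sort).reverse.getD i 0 ∈ S ∧
      i ≤ (S.filter ((S.sort).reverse.getD i 0 < ·)).card := by
  have hi' : i < (S.sort).reverse.length := by simpa using hi
  rw [List.getD_eq_getElem _ _ hi']
  refine ⟨(Finset.mem_sort _).1 (List.mem_reverse.1 (List.getElem_mem hi')), ?_⟩
  simpa using List.le_card_filter_gt_getElem (Finset.sortedLT_sort S).reverse.pairwise hi'

section Admissible

variable {w : List ℕ}

theorem length_admissible (hne : w ≠ []) :
    (admissible w).length = (Maxb w).card + (Maxa w).card + 1 := by
  simp [admissible, hne, add_assoc]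

theorem le_length_of_mem_admissible {c : ℕ} (hc : c ∈ admissible w) : c ≤ w.length := by
  by_cases hne : w = []
  · simp_all [admissible]
  simp only [admissible, hne, if_false, List.mem_append, List.mem_reverse, Finset.mem_sort,
    List.mem_singleton] at hc
  rcases hc with (hc | hc) | rfl
  · exact (mem_Maxb.1 hc).2.1
  · exact (mem_Maxa.1 hc).2.1
  · exact (i0_spec hne).2.1.trans' (Nat.sub_le _ _)

theorem getD_admissible_le_length (a : ℕ) : (admissible w).getD a 0 ≤ w.length := by
  rcases lt_or_ge a (admissible w).length with ha | ha
  · exact le_length_of_mem_admissible (List.getD_eq_getElem _ _ ha ▸ List.getElem_mem ha)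
  · exact (List.getD_eq_default _ _ ha).trans_le (Nat.zero_le _)

theorem getD_admissible_cases (hne : w ≠ []) {a c : ℕ} (ha : a < (admissible w).length)
    (hc : (admissible w).getD a 0 = c) :
    (c ∈ Maxb w ∧ a ≤ ((Maxb w).filter (c < ·)).card) ∨
      (c ∈ Maxa w ∧ a ≤ (Maxb w).card + ((Maxa w).filter (c < ·)).card) ∨
      (c = i0 w - 1 ∧ a ≤ (Maxb w).card + (Maxa w).card) := by
  have hB := (Maxb w).getD_sort_reverse_mem_and_le_card_filter (i := a)
  have hA := (Maxa w).getD_sort_reverse_mem_and_le_card_filter (i := a - (Maxb w).card)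
  rw [length_admissible hne] at ha
  simp only [admissible, hne, if_false, List.append_assoc] at hc
  rcases lt_or_ge a (Maxb w).card with h1 | h1
  · rw [List.getD_append _ _ _ _ (by simpa using h1)] at hc
    exact .inl (hc ▸ hB h1)
  rw [List.getD_append_right _ _ _ _ (by simpa using h1), List.length_reverse,
    Finset.length_sort] at hc
  rcases lt_or_ge a ((Maxb w).card + (Maxa w).card) with h2 | h2
  · rw [List.getD_append _ _ _ _ (by simp; omega)] at hc
    obtain ⟨hmem, hcard⟩ := hc ▸ hA (by omega)
    exact .inr (.inl ⟨hmem, by omega⟩)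
  · rw [List.getD_append_right _ _ _ _ (by simp; omega), List.length_reverse,
      Finset.length_sort, show a - (Maxb w).card - (Maxa w).card = 0 by omega] at hc
    exact .inr (.inr ⟨hc.symm, by omega⟩)

end Admissible

section InsertionCounts

variable {v : List ℕ} {c : ℕ}

theorem IsAreaSeq.get1_succ_le_insLetter (hv : IsAreaSeq v) (hc : c < v.length) :
    get1 v (c + 1) ≤ insLetter v c := by
  rcases Nat.eq_zero_or_pos c with rfl | hc0
  · exact (hv.1 (List.ne_nil_of_length_pos hc)).le
  · simpa [insLetter, hc0.ne'] using hv.2 c hc0 hc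

theorem isAreaSeq_ins (hv : IsAreaSeq v) (hc : c ≤ v.length) : IsAreaSeq (ins v c) := by
  refine ⟨fun _ => ?_, fun i hi hin => ?_⟩
  · rcases Nat.eq_zero_or_pos c with rfl | hc0
    · simpa [insLetter] using get1_ins_succ hc
    · rw [get1_ins_of_le le_rfl hc0 hc]
      exact hv.1 (List.ne_nil_of_length_pos (by omega))
  rw [length_ins hc] at hin
  obtain hic | rfl | rfl | hci : i < c ∨ i = c ∨ i = c + 1 ∨ c + 1 < i := by omega
  · rw [get1_ins_of_le hi hic.le hc, get1_ins_of_le (by omega) hic hc]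
    exact hv.2 i hi (by omega)
  · rw [get1_ins_succ hc, get1_ins_of_le hi le_rfl hc]
    simp [insLetter, Nat.one_le_iff_ne_zero.1 hi]
  · rw [get1_ins_succ hc, get1_ins_of_lt (by omega) hc, Nat.add_sub_cancel]
    exact (hv.get1_succ_le_insLetter (by omega)).trans (Nat.le_succ _)
  · rw [get1_ins_of_lt hci hc, get1_ins_of_lt (by omega) hc, Nat.add_sub_cancel]
    simpa [Nat.sub_add_cancel (by omega : 1 ≤ i)] using hv.2 (i - 1) (by omega) (by omega)

theorem succ_mem_Maxa_ins (hc : c ≤ v.length) {x : ℕ} (hcx : c < x) (hx : x ≤ v.length)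
    (hval : get1 v x + 1 = maxVal (ins v c))
    (hafter : ∀ j, x < j → j ≤ v.length → get1 v j < maxVal (ins v c)) :
    x + 1 ∈ Maxa (ins v c) := by
  refine mem_Maxa.2 ⟨by omega, by rw [length_ins hc]; omega, ?_, fun j hj hjn => ?_⟩
  · rwa [get1_ins_of_lt (by omega) hc]
  · rw [length_ins hc] at hjn
    rw [get1_ins_of_lt (by omega) hc]
    exact hafter _ (by omega) (by omega)

theorem card_filter_Maxb_add_one_le_of_mem_Maxb (hc : c ∈ Maxb v) :
    ((Maxb v).filter (c < ·)).card + 1 ≤ (Maxb (ins v c)).card + (Maxa (ins v c)).card := by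
  obtain ⟨hc1, hcn, hcval⟩ := mem_Maxb.1 hc
  have hletter : insLetter v c = maxVal v + 1 := by simp [insLetter, hcval]; omega
  have hmax : maxVal (ins v c) = maxVal v + 1 := by rw [maxVal_ins, hletter]; omega
  have hnew : 1 ≤ (Maxb (ins v c)).card :=
    Finset.card_pos.2 ⟨c + 1, mem_Maxb.2 ⟨by omega, by rw [length_ins hcn]; omega,
      by rw [get1_ins_succ hcn, hletter, hmax]⟩⟩
  -- the maximal letters to the right of `c` become the new `Maxa`
  have hshift : ((Maxb v).filter (c < ·)).card ≤ (Maxa (ins v c)).card := by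
    refine Finset.card_le_card_of_injOn (· + 1) (fun x hx => ?_) (fun _ _ _ _ h => by simpa using h)
    obtain ⟨hx, hcx⟩ := Finset.mem_filter.1 hx
    obtain ⟨-, hxn, hxval⟩ := mem_Maxb.1 hx
    refine succ_mem_Maxa_ins hcn hcx hxn (by omega) fun j _ _ => ?_
    have := get1_le_maxVal (w := v) j
    omega
  omega

theorem card_add_card_filter_add_one_le_of_insLetter_eq (hc : c ≤ v.length)
    (hletter : insLetter v c = maxVal v) :
    (Maxb v).card + ((Maxa v).filter (c < ·)).card + 1 ≤
      (Maxb (ins v c)).card + (Maxa (ins v c)).card := by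
  have hmax : maxVal (ins v c) = maxVal v := by rw [maxVal_ins, hletter, max_self]
  have hnew : c + 1 ∈ Maxb (ins v c) :=
    mem_Maxb.2 ⟨by omega, by rw [length_ins hc]; omega, by rw [get1_ins_succ hc, hletter, hmax]⟩
  have hB : (Maxb v).card ≤ ((Maxb (ins v c)).erase (c + 1)).card := by
    refine Finset.card_le_card_of_injOn (fun x => if x ≤ c then x else x + 1) (fun x hx => ?_)
      (fun x _ y _ h => by simp only at h; split_ifs at h <;> omega)
    obtain ⟨hx1, hxn, hxval⟩ := mem_Maxb.1 hx
    rw [Finset.mem_coe, Finset.mem_erase, mem_Maxb, length_ins hc, hmax]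
    dsimp only
    split_ifs with hxc
    · exact ⟨by omega, hx1, by omega, by rwa [get1_ins_of_le hx1 hxc hc]⟩
    · exact ⟨by omega, by omega, by omega, by rwa [get1_ins_of_lt (by omega) hc, Nat.add_sub_cancel]⟩
  have hA : ((Maxa v).filter (c < ·)).card ≤ (Maxa (ins v c)).card := by
    refine Finset.card_le_card_of_injOn (· + 1) (fun x hx => ?_) (fun _ _ _ _ h => by simpa using h)
    obtain ⟨hx, hcx⟩ := Finset.mem_filter.1 hx
    obtain ⟨-, hxn, hxval, hafter⟩ := mem_Maxa.1 hx
    exact succ_mem_Maxa_ins hc hcx hxn (hmax ▸ hxval) (hmax ▸ hafter)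
  rw [← Finset.card_erase_add_one hnew]
  omega

end InsertionCounts

section AdmissibleInsertion

variable {v : List ℕ}

theorem ins_ne_nil (c : ℕ) : ins v c ≠ [] := by simp [ins]

theorem insLetter_of_mem_Maxa {c : ℕ} (hc : c ∈ Maxa v) : insLetter v c = maxVal v := by
  obtain ⟨hc1, -, hcval, -⟩ := mem_Maxa.1 hc
  simpa [insLetter, Nat.one_le_iff_ne_zero.1 hc1] using hcval

theorem insLetter_i0_sub_one (hv : IsAreaSeq v) (hne : v ≠ []) :
    insLetter v (i0 v - 1) = maxVal v := by
  obtain ⟨h1, hn, hval, h1_or_prev⟩ := i0_spec hne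
  rcases eq_or_ne (i0 v) 1 with h | h
  · rw [h, ← hval, h, hv.1 hne]
    rfl
  · have hprev := h1_or_prev.resolve_left h
    have hstep := hv.2 (i0 v - 1) (by omega) (by omega)
    have hle := get1_le_maxVal (w := v) (i0 v - 1)
    rw [Nat.sub_add_cancel h1] at hstep
    simp only [insLetter, show i0 v - 1 ≠ 0 by omega, if_false]
    omega

theorem i0_sub_one_lt_of_mem_Maxa {x : ℕ} (hx : x ∈ Maxa v) : i0 v - 1 < x := by
  obtain ⟨hx1, hxn, hxval, hafter⟩ := mem_Maxa.1 hx
  obtain ⟨h1, hn, hval, -⟩ := i0_spec (List.ne_nil_of_length_pos (by omega : 0 < v.length))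
  by_contra! hle
  exact absurd (hafter (i0 v) (by omega) hn) (by omega)

theorem add_two_le_length_admissible_ins (hv : IsAreaSeq v) {a : ℕ}
    (ha : a < (admissible v).length) :
    a + 2 ≤ (admissible (ins v ((admissible v).getD a 0))).length := by
  set c := (admissible v).getD a 0 with hc
  have hcn : c ≤ v.length := getD_admissible_le_length a
  rw [length_admissible (ins_ne_nil c)]
  suffices a + 1 ≤ (Maxb (ins v c)).card + (Maxa (ins v c)).card by omega
  by_cases hne : v = []
  · have ha0 : a = 0 := by simpa [hne, admissible] using ha
    have := Finset.card_pos.2 (Maxb_nonempty (ins_ne_nil (v := v) c))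
    omega
  rcases getD_admissible_cases hne ha hc.symm with ⟨hmem, hcard⟩ | ⟨hmem, hcard⟩ | ⟨hci0, hcard⟩
  · have := card_filter_Maxb_add_one_le_of_mem_Maxb hmem
    omega
  · have := card_add_card_filter_add_one_le_of_insLetter_eq hcn (insLetter_of_mem_Maxa hmem)
    omega
  · have := card_add_card_filter_add_one_le_of_insLetter_eq hcn
      (hci0 ▸ insLetter_i0_sub_one hv hne)
    rw [Finset.filter_true_of_mem fun x hx => hci0 ▸ i0_sub_one_lt_of_mem_Maxa hx] at this
    omega

end AdmissibleInsertion

theorem get1_append_of_le {u l : List ℕ} {i : ℕ} (hi : 1 ≤ i) (hin : i ≤ u.length) :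
    get1 (u ++ l) i = get1 u i :=
  List.getD_append _ _ _ _ (by omega)

theorem get1_append_add {u l : List ℕ} {i : ℕ} (hi : 1 ≤ i) :
    get1 (u ++ l) (u.length + i) = get1 l i := by
  rw [get1, List.getD_append_right _ _ _ _ (by omega), get1]
  congr 1
  omega

theorem IsAreaSeq.of_append {u l : List ℕ} (h : IsAreaSeq (u ++ l)) : IsAreaSeq u := by
  refine ⟨fun hne => ?_, fun i hi hin => ?_⟩
  · rw [← get1_append_of_le le_rfl (List.length_pos_of_ne_nil hne)]
    exact h.1 (by simp [hne])
  · rw [← get1_append_of_le hi hin.le, ← get1_append_of_le (by omega) hin]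
    exact h.2 i hi (by simp; omega)

theorem IsAreaSeq.le_succ_of_append_pair {u : List ℕ} {b a : ℕ} (h : IsAreaSeq (u ++ [b, a])) :
    a ≤ b + 1 := by
  simpa [get1_append_add, get1] using h.2 (u.length + 1) (by omega) (by simp)

theorem psi_append_singleton (u : List ℕ) (a : ℕ) :
    psi (u ++ [a]) = ins (psi u) ((admissible (psi u)).getD a 0) := by
  simp [psi, psiRev]

theorem length_psi (u : List ℕ) : (psi u).length = u.length := by
  induction u using List.reverseRecOn with
  | nil => rfl
  | append_singleton u a ih =>
    rw [psi_append_singleton, length_ins (getD_admissible_le_length a), ih, List.length_append,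
      List.length_singleton]

theorem isAreaSeq_psi (u : List ℕ) : IsAreaSeq (psi u) := by
  induction u using List.reverseRecOn with
  | nil => exact ⟨fun h => absurd rfl h, fun i _ hi => absurd hi (by simp [psi, psiRev])⟩
  | append_singleton u a ih =>
    rw [psi_append_singleton]
    exact isAreaSeq_ins ih (getD_admissible_le_length a)

theorem succ_le_length_admissible_psi {u : List ℕ} {a : ℕ} (h : IsAreaSeq (u ++ [a])) :
    a + 1 ≤ (admissible (psi u)).length := by
  induction u using List.reverseRecOn generalizing a with
  | nil =>
    have ha : a = 0 := h.1 (by simp)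
    simp [ha, psi, psiRev, admissible]
  | append_singleton u b ih =>
    have hb := ih h.of_append
    have hab : a ≤ b + 1 := IsAreaSeq.le_succ_of_append_pair (by simpa using h)
    have := add_two_le_length_admissible_ins (isAreaSeq_psi u) hb
    rw [psi_append_singleton]
    omega

/-- For a nonempty area sequence `w = u a`, the word `ψ(u)` has at least
`a + 1` admissible insertion positions (so `ψ(w)` is well defined), and `ψ(w)`
is an area sequence of the same size as `w`. -/
theorem psi_well_defined (u : List ℕ) (a : ℕ) (hw : IsAreaSeq (u ++ [a])) :
    a + 1 ≤ (admissible (psi u)).length ∧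
      IsAreaSeq (psi (u ++ [a])) ∧
      (psi (u ++ [a])).length = (u ++ [a]).length :=
  ⟨succ_le_length_admissible_psi hw, isAreaSeq_psi _, length_psi _⟩
end

section
/- Let w be a nonempty area sequence with maximum value m and let c be a position with w_c = m − 1 and w_j < m for all j > c. Then dinv(ins_c(w)) = dinv(w) + #{ j : w_j = m } + #{ j > c : w_j = m − 1 }, and the maximum value of ins_c(w) is m. -/
/-!
Write `ins_c(w)` as `w₁ … w_c m w_{c+1} … w_n`. The dinv pairs of `ins_c(w)` are those of `w`
together with the pairs through the new letter `m`: one for each `i ≤ c` with `w_i ∈ {m, m + 1}`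
and one for each `j > c` with `w_j ∈ {m, m - 1}`. As `m` is the maximum, the former are the
`i ≤ c` with `w_i = m`, which are all positions carrying `m` since `w_j < m` for `j > c`; for the
same reason the latter are the `j > c` with `w_j = m - 1`.
-/

open Finset

lemma le_maxVal_of_mem {w : List ℕ} {a : ℕ} (h : a ∈ w) : a ≤ maxVal w :=
  List.le_max_of_le' 0 h le_rfl

lemma maxVal_append_cons (l₁ l₂ : List ℕ) (x : ℕ) :
    maxVal (l₁ ++ x :: l₂) = max x (maxVal (l₁ ++ l₂)) := by
  induction l₁ with
  | nil => rfl
  | cons a l₁ ih => exact (congrArg (max a) ih).trans (max_left_comm _ _ _)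

lemma card_filter_Ioc_get1 (p : ℕ → Prop) [DecidablePred p] (w : List ℕ) (c : ℕ) :
    #{j ∈ Ioc c w.length | p (get1 w j)} = (w.drop c).countP p := by
  induction h : w.length - c generalizing c with
  | zero =>
    have hc : w.length ≤ c := by omega
    simp [Ioc_eq_empty_of_le hc, List.drop_of_length_le hc]
  | succ k ih =>
    have hc : c < w.length := by omega
    have hwc : get1 w (c + 1) = w[c] := List.getD_eq_getElem _ _ hc
    rw [← Icc_add_one_left_eq_Ioc, Icc_eq_cons_Ioc (by omega), filter_cons,
      List.drop_eq_getElem_cons hc, List.countP_cons, ← ih (c + 1) (by omega), hwc]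
    split_ifs <;> simp_all

lemma dinv_eq_sum_countP (w : List ℕ) :
    dinv w = ∑ i ∈ range w.length,
      (w.drop (i + 1)).countP (fun b => b = w.getD i 0 ∨ b + 1 = w.getD i 0) := by
  rw [dinv, ← Ico_add_one_right_eq_Icc, sum_Ico_eq_sum_range, Nat.add_sub_cancel]
  refine sum_congr rfl fun i _ => ?_
  rw [add_comm 1 i]
  exact card_filter_Ioc_get1 (fun b => b = w.getD i 0 ∨ b + 1 = w.getD i 0) w (i + 1)

lemma dinv_cons (a : ℕ) (u : List ℕ) :
    dinv (a :: u) = u.countP (fun b => b = a ∨ b + 1 = a) + dinv u := by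
  rw [dinv_eq_sum_countP, dinv_eq_sum_countP, List.length_cons, sum_range_succ', add_comm]
  rfl

lemma dinv_append_cons (l₁ l₂ : List ℕ) (x : ℕ) :
    dinv (l₁ ++ x :: l₂) = dinv (l₁ ++ l₂) + l₁.countP (fun a => x = a ∨ x + 1 = a)
      + l₂.countP (fun b => b = x ∨ b + 1 = x) := by
  induction l₁ with
  | nil => simp [dinv_cons, add_comm]
  | cons a l₁ ih =>
    simp only [List.cons_append, dinv_cons, ih, List.countP_append, List.countP_cons]
    omega

theorem dinv_ins_at_submax_general (w : List ℕ)
    (c : ℕ) (hc1 : 1 ≤ c)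
    (hcm : get1 w c + 1 = maxVal w)
    (hright : ∀ j ∈ Finset.Ioc c w.length, get1 w j < maxVal w) :
    dinv (ins w c) = dinv w +
        ((Finset.Icc 1 w.length).filter (fun j => get1 w j = maxVal w)).card +
        ((Finset.Ioc c w.length).filter (fun j => get1 w j + 1 = maxVal w)).card ∧
      maxVal (ins w c) = maxVal w := by
  set m := maxVal w
  have hins : ins w c = w.take c ++ m :: w.drop c := by rw [ins, if_neg (by omega), hcm]
  have hdrop : ∀ b ∈ w.drop c, b < m := by
    have h := card_filter_Ioc_get1 (m ≤ ·) w c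
    rw [filter_false_of_mem fun j hj => (hright j hj).not_ge, card_empty, eq_comm,
      List.countP_eq_zero] at h
    simpa using h
  have hbefore : (w.take c).countP (fun a => m = a ∨ m + 1 = a) = w.countP (· = m) := by
    have hnone : (w.drop c).countP (· = m) = 0 :=
      List.countP_eq_zero.2 fun b hb => by simpa using (hdrop b hb).ne
    conv_rhs => rw [← List.take_append_drop c w, List.countP_append, hnone, add_zero]
    exact List.countP_congr fun a ha => by
      have := le_maxVal_of_mem (List.mem_of_mem_take ha); simp only [decide_eq_true_eq]; omega
  have hafter : (w.drop c).countP (fun b => b = m ∨ b + 1 = m) = (w.drop c).countP (· + 1 = m) :=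
    List.countP_congr fun b hb => by simpa using or_iff_right (hdrop b hb).ne
  refine ⟨?_, ?_⟩
  · rw [hins, dinv_append_cons, List.take_append_drop, hbefore, hafter,
      show Icc 1 w.length = Ioc 0 w.length from Icc_add_one_left_eq_Ioc 0 _,
      card_filter_Ioc_get1 (· = m) w 0, card_filter_Ioc_get1 (· + 1 = m) w c, List.drop_zero]
  · rw [hins, maxVal_append_cons, List.take_append_drop, max_self]

/-- Inserting in a nonempty area sequence `w` with maximal value `m` at a
position `c` with `w_c = m - 1` such that all letters after `c` are `< m`:
the dinv increases by `#{j : w_j = m} + #{j > c : w_j = m - 1}` and the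
maximal value is unchanged. -/
theorem dinv_ins_at_submax (w : List ℕ) (hw : IsAreaSeq w) (hne : w ≠ [])
    (c : ℕ) (hc1 : 1 ≤ c) (hc2 : c ≤ w.length)
    (hcm : get1 w c + 1 = maxVal w)
    (hright : ∀ j ∈ Finset.Ioc c w.length, get1 w j < maxVal w) :
    dinv (ins w c) = dinv w +
        ((Finset.Icc 1 w.length).filter (fun j => get1 w j = maxVal w)).card +
        ((Finset.Ioc c w.length).filter (fun j => get1 w j + 1 = maxVal w)).card ∧
      maxVal (ins w c) = maxVal w :=
  dinv_ins_at_submax_general w c hc1 hcm hright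
end
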